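/- arXiv:math/9907172 — 4 statements merged into one kernel-verified Lean document; each statement's English description precedes it below -/
import Mathlib

section
/- Let G be a group presented by generators t₁, …, tₙ and relations t_{i+1} = wᵢ⁻¹ tᵢ wᵢ for i = 1, …, n (indices mod n). Then the subgroup of G generated by t₁ and the element l = w₁ w₂ ⋯ wₙ · t₁^{-p} (for any integer p) is abelian. -/
/-!
The relation `t_{i+1} = wᵢ⁻¹ tᵢ wᵢ` says that `wᵢ` conjugates `t_{i+1}` into `tᵢ`. Chaining these
conjugations once around the cycle shows that `w₁ ⋯ wₙ` conjugates `t₁` into itself, i.e. commutes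
with `t₁`; hence so does `l = w₁ ⋯ wₙ t₁^{-p}`, and two commuting elements generate an abelian
subgroup.
-/

theorem SemiconjBy.list_ofFn_prod {G : Type*} [Monoid G] {m : ℕ} {t : Fin (m + 1) → G}
    {v : Fin m → G} (h : ∀ i, SemiconjBy (v i) (t i.succ) (t i.castSucc)) :
    SemiconjBy (List.ofFn v).prod (t (Fin.last m)) (t 0) := by
  induction m with
  | zero => simp
  | succ m ih =>
    rw [List.ofFn_succ, List.prod_cons, ← Fin.succ_last]
    refine (h 0).mul_left (ih (t := fun i => t i.succ) fun i => ?_)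
    simpa only [Fin.succ_castSucc] using h i.succ

theorem Commute.list_ofFn_prod_of_semiconjBy_finRotate {G : Type*} [Monoid G] {m : ℕ}
    {t v : Fin (m + 1) → G} (h : ∀ i, SemiconjBy (v i) (t (finRotate (m + 1) i)) (t i)) :
    Commute (List.ofFn v).prod (t 0) := by
  let T : Fin (m + 2) → G := Fin.snoc t (t 0)
  have hT : ∀ i, SemiconjBy (v i) (T i.succ) (T i.castSucc) := by
    intro i
    obtain ⟨j, rfl⟩ | rfl := Fin.eq_castSucc_or_eq_last i
    · simp only [T, Fin.succ_castSucc, Fin.snoc_castSucc]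
      simpa only [finRotate_apply, Fin.coeSucc_eq_succ] using h j.castSucc
    · simpa [T, finRotate_last] using h (Fin.last m)
  simpa [T, Commute] using SemiconjBy.list_ofFn_prod hT

/-- In a group with cyclic Wirtinger presentation
`⟨t₁,…,tₙ | t_{i+1} = wᵢ⁻¹ tᵢ wᵢ (i mod n)⟩`, the subgroup generated by the
meridian `t₁` and the longitude `l = w₁ ⋯ wₙ · t₁^{-p}` (for any integer `p`)
is abelian. -/
theorem peripheral_subgroup_abelian (n : ℕ) (hn : 1 ≤ n)
    (w : Fin n → FreeGroup (Fin n)) (p : ℤ) :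
    IsMulCommutative ↥(Subgroup.closure
      {(QuotientGroup.mk (FreeGroup.of (⟨0, hn⟩ : Fin n)) :
          PresentedGroup {r : FreeGroup (Fin n) |
            ∃ i : Fin n, r = (FreeGroup.of (finRotate n i))⁻¹ * ((w i)⁻¹ * FreeGroup.of i * w i)}),
        QuotientGroup.mk ((List.ofFn w).prod * (FreeGroup.of (⟨0, hn⟩ : Fin n)) ^ (-p))}) := by
  obtain ⟨m, rfl⟩ : ∃ m, n = m + 1 := ⟨n - 1, by omega⟩
  set mk := PresentedGroup.mk {r : FreeGroup (Fin (m + 1)) |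
    ∃ i, r = (FreeGroup.of (finRotate (m + 1) i))⁻¹ * ((w i)⁻¹ * FreeGroup.of i * w i)}
  have hrel : ∀ i, SemiconjBy (mk (w i)) (mk (.of (finRotate (m + 1) i))) (mk (.of i)) := by
    intro i
    have h : mk (.of (finRotate (m + 1) i)) = mk ((w i)⁻¹ * FreeGroup.of i * w i) :=
      PresentedGroup.mk_eq_mk_of_inv_mul_mem ⟨i, rfl⟩
    rw [SemiconjBy, h, map_mul, map_mul, map_inv]
    group
  have hW : Commute (mk (List.ofFn w).prod) (mk (.of 0)) := by
    rw [map_list_prod, List.map_ofFn]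
    exact Commute.list_ofFn_prod_of_semiconjBy_finRotate (t := fun i => mk (.of i)) hrel
  have hl : Commute (mk (.of 0)) (mk ((List.ofFn w).prod * FreeGroup.of 0 ^ (-p))) := by
    rw [map_mul, map_zpow]
    exact hW.symm.mul_right ((Commute.refl _).zpow_right _)
  apply Subgroup.isMulCommutative_closure
  rintro x (rfl | rfl) y (rfl | rfl)
  exacts [rfl, hl.eq, hl.eq.symm, rfl]
end

section
/- In the group Π = ⟨x, a | x a² = a x, a² x = x a⟩, setting y = a x, the element y⁻¹ x² y⁻¹ is equal to the identity. -/
/-- The relators of Fox's Example 12 group `⟨x, a | xa² = ax, a²x = xa⟩`,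
with `x` the generator `0` and `a` the generator `1`. -/
def foxRels : Set (FreeGroup (Fin 2)) :=
  {FreeGroup.of 0 * FreeGroup.of 1 ^ 2 * (FreeGroup.of 1 * FreeGroup.of 0)⁻¹,
   FreeGroup.of 1 ^ 2 * FreeGroup.of 0 * (FreeGroup.of 0 * FreeGroup.of 1)⁻¹}

lemma foxRel_one {r : FreeGroup (Fin 2)} (h : r ∈ foxRels) :
    (PresentedGroup.mk foxRels r : PresentedGroup foxRels) = 1 := by
  exact (QuotientGroup.eq_one_iff r).mpr (Subgroup.subset_normalClosure h)

lemma fox_rel1 :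
    (PresentedGroup.of 0 : PresentedGroup foxRels) * PresentedGroup.of 1 ^ 2 =
      PresentedGroup.of 1 * PresentedGroup.of 0 := by
  have h := foxRel_one (r := FreeGroup.of 0 * FreeGroup.of 1 ^ 2 *
      (FreeGroup.of 1 * FreeGroup.of 0)⁻¹) (Or.inl rfl)
  have h' : (PresentedGroup.mk foxRels (FreeGroup.of 0 * FreeGroup.of 1 ^ 2 *
      (FreeGroup.of 1 * FreeGroup.of 0)⁻¹) : PresentedGroup foxRels) =
      PresentedGroup.of 0 * PresentedGroup.of 1 ^ 2 *
      (PresentedGroup.of 1 * PresentedGroup.of 0)⁻¹ := by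
    simp [PresentedGroup.of]
  rw [h'] at h
  exact mul_inv_eq_one.mp h

lemma fox_rel2 :
    (PresentedGroup.of 1 : PresentedGroup foxRels) ^ 2 * PresentedGroup.of 0 =
      PresentedGroup.of 0 * PresentedGroup.of 1 := by
  have h := foxRel_one (r := FreeGroup.of 1 ^ 2 * FreeGroup.of 0 *
      (FreeGroup.of 0 * FreeGroup.of 1)⁻¹) (Or.inr rfl)
  have h' : (PresentedGroup.mk foxRels (FreeGroup.of 1 ^ 2 * FreeGroup.of 0 *
      (FreeGroup.of 0 * FreeGroup.of 1)⁻¹) : PresentedGroup foxRels) =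
      PresentedGroup.of 1 ^ 2 * PresentedGroup.of 0 *
      (PresentedGroup.of 0 * PresentedGroup.of 1)⁻¹ := by
    simp [PresentedGroup.of]
  rw [h'] at h
  exact mul_inv_eq_one.mp h

lemma fox_abstract {G : Type*} [Group G] (x a : G)
    (h1 : x * a ^ 2 = a * x) (h2 : a ^ 2 * x = x * a) :
    (a * x)⁻¹ * x ^ 2 * (a * x)⁻¹ = 1 := by
  have hxa : x * a = a ^ 2 * x := h2.symm
  have ha3 : a ^ 3 = 1 := by
    have key : a * x = a ^ 4 * x := by
      calc a * x = x * a ^ 2 := h1.symm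
        _ = (x * a) * a := by rw [pow_two, mul_assoc]
        _ = a ^ 2 * x * a := by rw [hxa]
        _ = a ^ 2 * (x * a) := by rw [mul_assoc]
        _ = a ^ 2 * (a ^ 2 * x) := by rw [hxa]
        _ = a ^ 4 * x := by rw [← mul_assoc, ← pow_add]
    have h4 : a = a ^ 4 := mul_right_cancel key
    have : a ^ 3 * a = 1 * a := by
      rw [one_mul, ← pow_succ]; exact h4.symm
    exact mul_right_cancel this
  have hx2 : x ^ 2 = (a * x) * (a * x) := by
    calc x ^ 2 = a ^ 3 * x ^ 2 := by rw [ha3, one_mul]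
      _ = a * (a ^ 2 * x) * x := by
          rw [pow_two]; group
      _ = a * (x * a) * x := by rw [h2]
      _ = (a * x) * (a * x) := by group
  rw [hx2]
  group

/-- In the group `⟨x, a | xa² = ax, a²x = xa⟩`, setting `y = ax`, the longitude
`y⁻¹ x² y⁻¹` is trivial. -/
theorem fox_longitude_trivial :
    letI x : PresentedGroup foxRels := PresentedGroup.of 0
    letI a : PresentedGroup foxRels := PresentedGroup.of 1
    letI y := a * x
    y⁻¹ * x ^ 2 * y⁻¹ = 1 :=
  fox_abstract (PresentedGroup.of 0) (PresentedGroup.of 1) fox_rel1 fox_rel2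
end

section
/- The ideal generated by 3 and 1 + t in the Laurent polynomial ring ℤ[t, t⁻¹] is not a principal ideal. -/
/-! If `(3, 1 + t) = (g)`, then `g ∣ 3`, and since `3` is prime in `ℤ[t, t⁻¹]` either `g` is a unit
or `3 ∣ g`. The ideal is proper, as `t ↦ -1` into `ZMod 3` kills both generators, so `3 ∣ g ∣ 1 + t`;
but `t ↦ 1` into `ZMod 3` sends `1 + t` to `2 ≠ 0`. -/

open LaurentPolynomial

theorem Irreducible.dvd_of_isPrincipal_span_pair {R : Type*} [CommSemiring R] {p q : R}
    (hp : Irreducible p) (hne : Ideal.span {p, q} ≠ ⊤) (hprin : (Ideal.span {p, q}).IsPrincipal) :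
    p ∣ q := by
  obtain ⟨g, hg⟩ := hprin
  rw [Ideal.submodule_span_eq] at hg
  have hg_dvd : ∀ x ∈ ({p, q} : Set R), g ∣ x := fun x hx =>
    Ideal.mem_span_singleton.1 (hg ▸ Ideal.subset_span hx)
  obtain ⟨a, hpa⟩ := hg_dvd p (by simp)
  rcases hp.isUnit_or_isUnit hpa with hg_unit | ha_unit
  · exact absurd (hg.trans (Ideal.span_singleton_eq_top.2 hg_unit)) hne
  · have hpg : p ∣ g := (ha_unit.dvd_mul_right).1 (hpa ▸ dvd_rfl)
    exact hpg.trans (hg_dvd q (by simp))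

theorem LaurentPolynomial.prime_C {R : Type*} [CommRing R] [IsDomain R] {p : R} (hp : Prime p) :
    Prime (C p : R[T;T⁻¹]) := by
  have hCp : Polynomial.C p ≠ 0 := Polynomial.C_ne_zero.2 hp.ne_zero
  have hpoly : (Ideal.span {Polynomial.C p}).IsPrime :=
    (Ideal.span_singleton_prime hCp).2 (Polynomial.prime_C_iff.2 hp)
  have hdisj : Disjoint (Submonoid.powers (Polynomial.X : Polynomial R) : Set (Polynomial R))
      (Ideal.span {Polynomial.C p}) := by
    rw [Set.disjoint_left]
    rintro _ ⟨n, rfl⟩ hdvd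
    rw [SetLike.mem_coe, Ideal.mem_span_singleton, Polynomial.C_dvd_iff_dvd_coeff] at hdvd
    exact hp.not_dvd_one (by simpa using hdvd n)
  have hloc := IsLocalization.isPrime_of_isPrime_disjoint _ R[T;T⁻¹] _ hpoly hdisj
  rw [Ideal.map_span, Set.image_singleton, algebraMap_eq_toLaurent] at hloc
  rw [← Polynomial.toLaurent_C]
  exact (Ideal.span_singleton_prime (Polynomial.toLaurent_ne_zero.2 hCp)).1 hloc

theorem span_three_one_add_T_ne_top :
    Ideal.span ({3, 1 + T 1} : Set ℤ[T;T⁻¹]) ≠ ⊤ := by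
  intro htop
  have hker : Ideal.span ({3, 1 + T 1} : Set ℤ[T;T⁻¹]) ≤
      RingHom.ker (eval₂ (Int.castRingHom (ZMod 3)) (-1)) := by
    rw [Ideal.span_le]
    rintro _ (rfl | rfl) <;>
      simp only [SetLike.mem_coe, RingHom.mem_ker, map_ofNat, map_add, map_one, eval₂_T, zpow_one] <;>
      decide
  exact RingHom.ker_ne_top _ (top_le_iff.1 (htop ▸ hker))

theorem not_three_dvd_one_add_T : ¬ (3 : ℤ[T;T⁻¹]) ∣ 1 + T 1 := by
  intro h
  have := map_dvd (eval₂ (Int.castRingHom (ZMod 3)) 1) h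
  simp only [map_ofNat, map_add, map_one, eval₂_T, one_zpow] at this
  exact absurd this (by decide)

/-- The ideal `(3, 1 + t)` in the Laurent polynomial ring `ℤ[t, t⁻¹]` is not principal. -/
theorem alexander_ideal_not_principal :
    ¬ (Ideal.span ({3, 1 + LaurentPolynomial.T 1} : Set (LaurentPolynomial ℤ))).IsPrincipal := by
  intro hprin
  have h3 : Prime (3 : ℤ[T;T⁻¹]) := by simpa using LaurentPolynomial.prime_C Int.prime_three
  exact not_three_dvd_one_add_T
    (h3.irreducible.dvd_of_isPrincipal_span_pair span_three_one_add_T_ne_top hprin)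
end

section
/- Consider the group K presented by generators xᵢ for i ∈ ℤ and relations xᵢ = x_{i+1}² and x_{i+1} = xᵢ² for all i ∈ ℤ. Then K is cyclic of order 3. -/
/-!
From `a = b²` and `b = a²` one gets `a = a⁴`, so every generator has order dividing 3, and since
`2 ≡ -1 (mod 3)` the relations say exactly that `xᵢ = x₀ ^ (-1)ⁱ`: the group is cyclic, generated by
`x₀` with `x₀³ = 1`. Conversely `xᵢ ↦ (-1)ⁱ ∈ ℤ/3` respects the relations, so `x₀ ≠ 1`.
-/

section SquaringSequence

variable {G : Type*} [Group G]

theorem pow_three_eq_one_of_eq_sq_of_eq_sq {a b : G} (hab : a = b ^ 2) (hba : b = a ^ 2) :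
    a ^ 3 = 1 := by
  have h : a * a ^ 3 = a * 1 := by
    calc a * a ^ 3 = (a ^ 2) ^ 2 := by group
      _ = a * 1 := by rw [← hba, ← hab, mul_one]
  exact mul_left_cancel h

theorem zpow_sq_eq_zpow_neg_of_pow_three_eq_one {a : G} (ha : a ^ 3 = 1) (k : ℤ) :
    (a ^ k) ^ 2 = a ^ (-k) := by
  calc (a ^ k) ^ 2 = (a ^ 3) ^ k * a ^ (-k) := by group
    _ = a ^ (-k) := by rw [ha, one_zpow, one_mul]

theorem zpow_negOnePow_succ_sq {a : G} (ha : a ^ 3 = 1) (i : ℤ) :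
    a ^ ((i + 1).negOnePow : ℤ) = (a ^ (i.negOnePow : ℤ)) ^ 2 := by
  rw [zpow_sq_eq_zpow_neg_of_pow_three_eq_one ha, Int.negOnePow_succ, Units.val_neg]

theorem zpow_negOnePow_eq_succ_sq {a : G} (ha : a ^ 3 = 1) (i : ℤ) :
    a ^ (i.negOnePow : ℤ) = (a ^ ((i + 1).negOnePow : ℤ)) ^ 2 := by
  rw [zpow_sq_eq_zpow_neg_of_pow_three_eq_one ha, Int.negOnePow_succ, Units.val_neg, neg_neg]

theorem eq_zpow_negOnePow_of_eq_sq {g : ℤ → G} (hsq : ∀ i, g i = g (i + 1) ^ 2)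
    (hsq' : ∀ i, g (i + 1) = g i ^ 2) (i : ℤ) : g i = g 0 ^ (i.negOnePow : ℤ) := by
  have h3 : g 0 ^ 3 = 1 := pow_three_eq_one_of_eq_sq_of_eq_sq (hsq 0) (hsq' 0)
  induction i using Int.induction_on with
  | zero => simp
  | succ n ih => rw [hsq', ih, zpow_negOnePow_succ_sq h3]
  | pred n ih =>
    have h := hsq (-(n : ℤ) - 1)
    have h' := zpow_negOnePow_eq_succ_sq h3 (-(n : ℤ) - 1)
    rw [sub_add_cancel] at h h'
    rw [h, ih, h']

end SquaringSequence

namespace SquaringPresentation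

abbrev rels : Set (FreeGroup ℤ) :=
  {r : FreeGroup ℤ |
      ∃ i : ℤ, r = (FreeGroup.of i)⁻¹ * FreeGroup.of (i + 1) ^ 2 ∨
        r = (FreeGroup.of (i + 1))⁻¹ * FreeGroup.of i ^ 2}

abbrev x (i : ℤ) : PresentedGroup rels := PresentedGroup.of i

theorem x_eq_sq_succ (i : ℤ) : x i = x (i + 1) ^ 2 :=
  PresentedGroup.mk_eq_mk_of_inv_mul_mem ⟨i, Or.inl rfl⟩

theorem x_succ_eq_sq (i : ℤ) : x (i + 1) = x i ^ 2 :=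
  PresentedGroup.mk_eq_mk_of_inv_mul_mem ⟨i, Or.inr rfl⟩

theorem mem_zpowers_x_zero (g : PresentedGroup rels) : g ∈ Subgroup.zpowers (x 0) :=
  PresentedGroup.generated_by rels _ (fun i => by
    show x i ∈ _
    rw [eq_zpow_negOnePow_of_eq_sq x_eq_sq_succ x_succ_eq_sq i]
    exact zpow_mem (Subgroup.mem_zpowers _) _) g

def toZMod : PresentedGroup rels →* Multiplicative (ZMod 3) :=
  PresentedGroup.toGroup (f := fun i => Multiplicative.ofAdd 1 ^ (i.negOnePow : ℤ)) <| by
    have h3 : Multiplicative.ofAdd (1 : ZMod 3) ^ 3 = 1 := rfl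
    rintro r ⟨i, rfl | rfl⟩ <;>
      simp only [map_mul, map_inv, map_pow, FreeGroup.lift_apply_of, inv_mul_eq_one]
    · exact zpow_negOnePow_eq_succ_sq h3 i
    · exact zpow_negOnePow_succ_sq h3 i

theorem toZMod_x (i : ℤ) : toZMod (x i) = Multiplicative.ofAdd 1 ^ (i.negOnePow : ℤ) :=
  PresentedGroup.toGroup.of _

theorem x_zero_ne_one : x 0 ≠ 1 := fun h => by
  simpa [toZMod_x] using congrArg toZMod h

theorem orderOf_x_zero : orderOf (x 0) = 3 :=
  haveI : Fact (Nat.Prime 3) := ⟨Nat.prime_three⟩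
  orderOf_eq_prime (pow_three_eq_one_of_eq_sq_of_eq_sq (x_eq_sq_succ 0) (x_succ_eq_sq 0))
    x_zero_ne_one

theorem card_eq_three : Nat.card (PresentedGroup rels) = 3 := by
  rw [← orderOf_eq_card_of_forall_mem_zpowers mem_zpowers_x_zero, orderOf_x_zero]

end SquaringPresentation

/-- The group `⟨xᵢ (i ∈ ℤ) | xᵢ = x_{i+1}², x_{i+1} = xᵢ²⟩` is cyclic of order 3. -/
theorem infinite_cyclic_cover_group :
    Nonempty
      (PresentedGroup {r : FreeGroup ℤ |
          ∃ i : ℤ, r = (FreeGroup.of i)⁻¹ * FreeGroup.of (i + 1) ^ 2 ∨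
            r = (FreeGroup.of (i + 1))⁻¹ * FreeGroup.of i ^ 2} ≃*
        Multiplicative (ZMod 3)) :=
  ⟨(zmodMulEquivOfGenerator SquaringPresentation.mem_zpowers_x_zero
    SquaringPresentation.card_eq_three).symm⟩
end
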